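/- Let N ≥ 4, let a₁, …, a_N be pairwise distinct real numbers, let κ₂, κ₃, κ₄ ∈ ℝ, and fix i ∈ {1, …, N}. For each m ∈ {1, …, N} define c_m⁽²⁾ = (κ₂/N) ∑_{k ≠ m} (a_m − a_k)⁻¹, c_m⁽³⁾ = (κ₃/N²) ∑_{k₁, k₂ ≠ m, k₁ ≠ k₂} (a_m − a_{k₁})⁻¹ (a_m − a_{k₂})⁻¹, and c_m⁽⁴⁾ = (κ₄/N³) ∑_{k₁, k₂, k₃ ≠ m, pairwise distinct} ∏_{j=1}^{3} (a_m − a_{k_j})⁻¹ − (κ₂²/N²) ∑_{k ≠ m} (a_m − a_k)⁻³, and set λ_m(t) = a_m + t c_m⁽²⁾ + t^{3/2} c_m⁽³⁾ + t² c_m⁽⁴⁾ for t ≥ 0. Define F_i(t) = (κ₂/N) ∑_{k ≠ i} (λ_i(t) − λ_k(t))⁻¹ + (3 κ₃ t^{1/2}/(2N²)) ∑_{k₁, k₂ ≠ i, k₁ ≠ k₂} (λ_i(t) − λ_{k₁}(t))⁻¹ (λ_i(t) − λ_{k₂}(t))⁻¹ + (2 κ₄ t/N³) ∑_{k₁, k₂,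 k₃ ≠ i, pairwise distinct} ∏_{j=1}^{3} (λ_i(t) − λ_{k_j}(t))⁻¹. Then, as t → 0⁺, λ_i′(t) − F_i(t) = o(t). -/

import Mathlib

open Finset

/-- Expected second-order perturbation coefficient `c_m⁽²⁾ = (κ₂/N) ∑_{k≠m} (a_m − a_k)⁻¹`. -/
noncomputable def pertCoeff2 (N : ℕ) (κ₂ : ℝ) (a : Fin N → ℝ) (m : Fin N) : ℝ :=
  (κ₂ / N) * ∑ k ∈ univ.erase m, (a m - a k)⁻¹

/-- Expected third-order perturbation coefficient
`c_m⁽³⁾ = (κ₃/N²) ∑_{k₁≠k₂, both ≠ m} (a_m − a_{k₁})⁻¹ (a_m − a_{k₂})⁻¹`. -/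
noncomputable def pertCoeff3 (N : ℕ) (κ₃ : ℝ) (a : Fin N → ℝ) (m : Fin N) : ℝ :=
  (κ₃ / (N : ℝ) ^ 2) *
    ∑ k₁ ∈ univ.erase m, ∑ k₂ ∈ (univ.erase m).erase k₁,
      (a m - a k₁)⁻¹ * (a m - a k₂)⁻¹

/-- Expected fourth-order perturbation coefficient
`c_m⁽⁴⁾ = (κ₄/N³) ∑_{k₁,k₂,k₃ p.d., ≠ m} ∏_j (a_m − a_{k_j})⁻¹
        − (κ₂²/N²) ∑_{k≠m} (a_m − a_k)⁻³`. -/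
noncomputable def pertCoeff4 (N : ℕ) (κ₂ κ₄ : ℝ) (a : Fin N → ℝ) (m : Fin N) : ℝ :=
  (κ₄ / (N : ℝ) ^ 3) *
      (∑ k₁ ∈ univ.erase m, ∑ k₂ ∈ (univ.erase m).erase k₁,
        ∑ k₃ ∈ ((univ.erase m).erase k₁).erase k₂,
          (a m - a k₁)⁻¹ * (a m - a k₂)⁻¹ * (a m - a k₃)⁻¹) -
    (κ₂ ^ 2 / (N : ℝ) ^ 2) * ∑ k ∈ univ.erase m, ((a m - a k)⁻¹) ^ 3

/-- Second-order perturbative eigenvalue trajectory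
`λ_m(t) = a_m + t c_m⁽²⁾ + t^{3/2} c_m⁽³⁾ + t² c_m⁽⁴⁾`. -/
noncomputable def pertEigenvalue (N : ℕ) (κ₂ κ₃ κ₄ : ℝ) (a : Fin N → ℝ) (m : Fin N)
    (t : ℝ) : ℝ :=
  a m + t * pertCoeff2 N κ₂ a m + t * Real.sqrt t * pertCoeff3 N κ₃ a m +
    t ^ 2 * pertCoeff4 N κ₂ κ₄ a m

/-- The velocity field of the paper's dynamical system, truncated at the four-body
force, evaluated on the perturbative trajectories. -/
noncomputable def truncatedVelocity (N : ℕ) (κ₂ κ₃ κ₄ : ℝ) (a : Fin N → ℝ) (i : Fin N)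
    (t : ℝ) : ℝ :=
  (κ₂ / N) * ∑ k ∈ univ.erase i,
      (pertEigenvalue N κ₂ κ₃ κ₄ a i t - pertEigenvalue N κ₂ κ₃ κ₄ a k t)⁻¹ +
    (3 * κ₃ * Real.sqrt t / (2 * (N : ℝ) ^ 2)) *
      (∑ k₁ ∈ univ.erase i, ∑ k₂ ∈ (univ.erase i).erase k₁,
        (pertEigenvalue N κ₂ κ₃ κ₄ a i t - pertEigenvalue N κ₂ κ₃ κ₄ a k₁ t)⁻¹ *
          (pertEigenvalue N κ₂ κ₃ κ₄ a i t - pertEigenvalue N κ₂ κ₃ κ₄ a k₂ t)⁻¹) +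
    (2 * κ₄ * t / (N : ℝ) ^ 3) *
      (∑ k₁ ∈ univ.erase i, ∑ k₂ ∈ (univ.erase i).erase k₁,
        ∑ k₃ ∈ ((univ.erase i).erase k₁).erase k₂,
          (pertEigenvalue N κ₂ κ₃ κ₄ a i t - pertEigenvalue N κ₂ κ₃ κ₄ a k₁ t)⁻¹ *
            (pertEigenvalue N κ₂ κ₃ κ₄ a i t - pertEigenvalue N κ₂ κ₃ κ₄ a k₂ t)⁻¹ *
            (pertEigenvalue N κ₂ κ₃ κ₄ a i t - pertEigenvalue N κ₂ κ₃ κ₄ a k₃ t)⁻¹)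

/-! On `t > 0` write `P, Q, R` for the one-, two- and three-body sums of inverse gaps
`(λ_i(t) − λ_k(t))⁻¹`. Since `λ(0) = a`, the coefficients `c⁽²⁾, c⁽³⁾` and the `κ₄` part of `c⁽⁴⁾`
are `P(0), Q(0), R(0)` up to constants, so
`λ_i′ − F_i = −(κ₂/N)(P(t) − P(0) − t P′(0)) − (3κ₃/2N²) √t (Q(t) − Q(0)) − (2κ₄/N³) t (R(t) − R(0))`
provided `(κ₂/N) P′(0) = −2(κ₂²/N²) ∑_{k≠i} (a_i − a_k)⁻³`. That is the identity
`∑_{k≠i} (h_i − h_k)/(a_i − a_k)² = 2 ∑_{k≠i} (a_i − a_k)⁻³` for `h_m = ∑_{k≠m} (a_m − a_k)⁻¹`.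
The trajectories are differentiable at `0` (`t^{3/2}` has derivative `0` there), hence so are
`P, Q, R`, and each of the three terms is `o(t)`. -/

open Filter Topology Asymptotics

theorem sum_sum_erase_eq_zero_of_antisymm {α M : Type*} [DecidableEq α] [AddCommGroup M]
    (s : Finset α) (T : α → α → M) (hT : ∀ k ∈ s, ∀ j ∈ s, k ≠ j → T k j + T j k = 0) :
    ∑ k ∈ s, ∑ j ∈ s.erase k, T k j = 0 := by
  rw [sum_sigma']
  refine sum_involution (fun p _ => ⟨p.2, p.1⟩) ?_ ?_ ?_ fun _ _ => rfl
  · rintro ⟨k, j⟩ hkj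
    simp only [mem_sigma, mem_erase] at hkj
    exact hT k hkj.1 j hkj.2.2 hkj.2.1.symm
  · rintro ⟨k, j⟩ hkj _
    simp only [mem_sigma, mem_erase] at hkj
    simp [hkj.2.1]
  · rintro ⟨k, j⟩ hkj
    simp only [mem_sigma, mem_erase] at hkj ⊢
    exact ⟨hkj.2.2, hkj.2.1.symm, hkj.1⟩

section InvGapSum

variable {ι K : Type*} [Fintype ι] [DecidableEq ι] [Field K]

noncomputable def invGapSum₁ (x : ι → K) (i : ι) : K :=
  ∑ k ∈ univ.erase i, (x i - x k)⁻¹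

noncomputable def invGapSum₂ (x : ι → K) (i : ι) : K :=
  ∑ k₁ ∈ univ.erase i, ∑ k₂ ∈ (univ.erase i).erase k₁, (x i - x k₁)⁻¹ * (x i - x k₂)⁻¹

noncomputable def invGapSum₃ (x : ι → K) (i : ι) : K :=
  ∑ k₁ ∈ univ.erase i, ∑ k₂ ∈ (univ.erase i).erase k₁, ∑ k₃ ∈ ((univ.erase i).erase k₁).erase k₂,
    (x i - x k₁)⁻¹ * (x i - x k₂)⁻¹ * (x i - x k₃)⁻¹

theorem invGapSum₁_sub_invGapSum₁ (x : ι → K) {i k : ι} (hki : k ≠ i) :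
    invGapSum₁ x i - invGapSum₁ x k = 2 * (x i - x k)⁻¹ +
      ∑ j ∈ (univ.erase i).erase k, ((x i - x j)⁻¹ - (x k - x j)⁻¹) := by
  have hk : k ∈ univ.erase i := mem_erase.2 ⟨hki, mem_univ k⟩
  have hi : i ∈ univ.erase k := mem_erase.2 ⟨hki.symm, mem_univ i⟩
  rw [invGapSum₁, invGapSum₁, ← add_sum_erase _ _ hk, ← add_sum_erase _ _ hi,
    erase_right_comm, sum_sub_distrib, ← neg_sub (x i), inv_neg]
  ring

theorem sum_invGapSum₁_sub_div_sq {x : ι → K} (hx : Function.Injective x) (i : ι) :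
    ∑ k ∈ univ.erase i, (invGapSum₁ x i - invGapSum₁ x k) / (x i - x k) ^ 2 =
      2 * ∑ k ∈ univ.erase i, ((x i - x k)⁻¹) ^ 3 := by
  have hne {k j : ι} (h : k ≠ j) : x k - x j ≠ 0 := sub_ne_zero.2 (hx.ne h)
  have hcancel : ∑ k ∈ univ.erase i, ∑ j ∈ (univ.erase i).erase k,
      ((x i - x j)⁻¹ - (x k - x j)⁻¹) / (x i - x k) ^ 2 = 0 := by
    refine sum_sum_erase_eq_zero_of_antisymm _ _ fun k hk j hj hkj => ?_
    have := hne (ne_of_mem_erase hk).symm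
    have := hne (ne_of_mem_erase hj).symm
    have := hne hkj
    have := hne hkj.symm
    field_simp
    ring
  rw [mul_sum, ← sub_eq_zero, ← sum_sub_distrib, ← hcancel]
  refine sum_congr rfl fun k hk => ?_
  have hki := ne_of_mem_erase hk
  have := hne hki.symm
  rw [invGapSum₁_sub_invGapSum₁ x hki, add_div, sum_div]
  field_simp
  ring

end InvGapSum

section Curves

variable {ι 𝕜 : Type*} [Fintype ι] [DecidableEq ι] [NontriviallyNormedField 𝕜]
  {x : ι → 𝕜 → 𝕜} {t₀ : 𝕜}

theorem hasDerivAt_invGapSum₁ {x' : ι → 𝕜} (hx : ∀ m, HasDerivAt (x m) (x' m) t₀)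
    (hinj : Function.Injective fun m => x m t₀) (i : ι) :
    HasDerivAt (fun t => invGapSum₁ (fun m => x m t) i)
      (-∑ k ∈ univ.erase i, (x' i - x' k) / (x i t₀ - x k t₀) ^ 2) t₀ := by
  rw [← sum_neg_distrib]
  exact HasDerivAt.fun_sum fun k hk =>
    (((hx i).sub (hx k)).inv (sub_ne_zero.2 (hinj.ne (ne_of_mem_erase hk).symm))).congr_deriv
      (neg_div _ _)

theorem differentiableAt_inv_sub (hx : ∀ m, DifferentiableAt 𝕜 (x m) t₀)
    (hinj : Function.Injective fun m => x m t₀) {i k : ι} (hk : k ∈ univ.erase i) :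
    DifferentiableAt 𝕜 (fun t => (x i t - x k t)⁻¹) t₀ :=
  ((hx i).sub (hx k)).inv (sub_ne_zero.2 (hinj.ne (ne_of_mem_erase hk).symm))

theorem differentiableAt_invGapSum₂ (hx : ∀ m, DifferentiableAt 𝕜 (x m) t₀)
    (hinj : Function.Injective fun m => x m t₀) (i : ι) :
    DifferentiableAt 𝕜 (fun t => invGapSum₂ (fun m => x m t) i) t₀ :=
  DifferentiableAt.fun_sum fun _ hk₁ => DifferentiableAt.fun_sum fun _ hk₂ =>
    (differentiableAt_inv_sub hx hinj hk₁).fun_mul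
      (differentiableAt_inv_sub hx hinj (mem_of_mem_erase hk₂))

theorem differentiableAt_invGapSum₃ (hx : ∀ m, DifferentiableAt 𝕜 (x m) t₀)
    (hinj : Function.Injective fun m => x m t₀) (i : ι) :
    DifferentiableAt 𝕜 (fun t => invGapSum₃ (fun m => x m t) i) t₀ :=
  DifferentiableAt.fun_sum fun _ hk₁ => DifferentiableAt.fun_sum fun _ hk₂ =>
    DifferentiableAt.fun_sum fun _ hk₃ =>
      ((differentiableAt_inv_sub hx hinj hk₁).fun_mul
        (differentiableAt_inv_sub hx hinj (mem_of_mem_erase hk₂))).fun_mul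
        (differentiableAt_inv_sub hx hinj (mem_of_mem_erase (mem_of_mem_erase hk₃)))

end Curves

theorem hasDerivAt_mul_sqrt {t : ℝ} (ht : 0 ≤ t) :
    HasDerivAt (fun u => u * √u) (3 / 2 * √t) t := by
  rcases ht.eq_or_lt with rfl | ht
  · rw [hasDerivAt_iff_tendsto_slope]
    have hsqrt : Tendsto Real.sqrt (𝓝[≠] 0) (𝓝 0) := by
      simpa using (Real.continuous_sqrt.tendsto 0).mono_left nhdsWithin_le_nhds
    refine (hsqrt.congr' ?_).trans (by simp)
    filter_upwards [self_mem_nhdsWithin] with u hu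
    rw [slope_def_field, zero_mul, sub_zero, sub_zero, mul_div_cancel_left₀ _ hu]
  · refine ((hasDerivAt_id' t).fun_mul (Real.hasDerivAt_sqrt ht.ne')).congr_deriv ?_
    have := Real.sqrt_pos.2 ht
    field_simp
    rw [Real.sq_sqrt ht.le]
    ring

theorem DifferentiableAt.isLittleO_sqrt_mul_sub {f : ℝ → ℝ} (hf : DifferentiableAt ℝ f 0) :
    (fun t => √t * (f t - f 0)) =o[𝓝 0] fun t => t := by
  have hsqrt : Real.sqrt =o[𝓝 0] (fun _ => (1 : ℝ)) :=
    (isLittleO_one_iff ℝ).2 (by simpa using Real.continuous_sqrt.tendsto 0)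
  simpa using hsqrt.mul_isBigO hf.isBigO_sub

theorem ContinuousAt.isLittleO_mul_sub {f : ℝ → ℝ} (hf : ContinuousAt f 0) :
    (fun t => t * (f t - f 0)) =o[𝓝 0] fun t => t := by
  have hsub : (fun t => f t - f 0) =o[𝓝 0] (fun _ => (1 : ℝ)) :=
    (isLittleO_one_iff ℝ).2 (by simpa using hf.sub_const (f 0))
  simpa using (isBigO_refl (fun t : ℝ => t) _).mul_isLittleO hsub

section Perturbation

variable (N : ℕ) (κ₂ κ₃ κ₄ : ℝ) (a : Fin N → ℝ) (m : Fin N)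

theorem pertCoeff2_eq : pertCoeff2 N κ₂ a m = κ₂ / N * invGapSum₁ a m := rfl

theorem pertCoeff3_eq : pertCoeff3 N κ₃ a m = κ₃ / N ^ 2 * invGapSum₂ a m := rfl

theorem pertCoeff4_eq : pertCoeff4 N κ₂ κ₄ a m =
    κ₄ / N ^ 3 * invGapSum₃ a m - κ₂ ^ 2 / N ^ 2 * ∑ k ∈ univ.erase m, ((a m - a k)⁻¹) ^ 3 :=
  rfl

theorem truncatedVelocity_eq (t : ℝ) : truncatedVelocity N κ₂ κ₃ κ₄ a m t =
    κ₂ / N * invGapSum₁ (fun k => pertEigenvalue N κ₂ κ₃ κ₄ a k t) m +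
      3 * κ₃ * √t / (2 * N ^ 2) * invGapSum₂ (fun k => pertEigenvalue N κ₂ κ₃ κ₄ a k t) m +
      2 * κ₄ * t / N ^ 3 * invGapSum₃ (fun k => pertEigenvalue N κ₂ κ₃ κ₄ a k t) m :=
  rfl

theorem pertEigenvalue_zero : pertEigenvalue N κ₂ κ₃ κ₄ a m 0 = a m := by
  simp [pertEigenvalue]

theorem hasDerivAt_pertEigenvalue {t : ℝ} (ht : 0 ≤ t) :
    HasDerivAt (pertEigenvalue N κ₂ κ₃ κ₄ a m)
      (pertCoeff2 N κ₂ a m + 3 / 2 * √t * pertCoeff3 N κ₃ a m + 2 * t * pertCoeff4 N κ₂ κ₄ a m)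
      t := by
  refine (((((hasDerivAt_id' t).mul_const _).const_add (a m)).fun_add
    ((hasDerivAt_mul_sqrt ht).mul_const _)).fun_add
    ((hasDerivAt_pow 2 t).mul_const _)).congr_deriv ?_
  norm_num

variable {a}

theorem sum_pertCoeff2_sub_div_sq (ha : Function.Injective a) :
    ∑ k ∈ univ.erase m, (pertCoeff2 N κ₂ a m - pertCoeff2 N κ₂ a k) / (a m - a k) ^ 2 =
      2 * κ₂ / N * ∑ k ∈ univ.erase m, ((a m - a k)⁻¹) ^ 3 := by
  simp only [pertCoeff2_eq, ← mul_sub, mul_div_assoc, ← mul_sum, sum_invGapSum₁_sub_div_sq ha]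
  ring

end Perturbation

theorem perturbation_solves_dynamics_general
    (N : ℕ) (a : Fin N → ℝ) (ha : Function.Injective a)
    (κ₂ κ₃ κ₄ : ℝ) (i : Fin N) :
    (fun t : ℝ =>
        deriv (pertEigenvalue N κ₂ κ₃ κ₄ a i) t - truncatedVelocity N κ₂ κ₃ κ₄ a i t)
      =o[nhdsWithin 0 (Set.Ioi 0)] fun t : ℝ => t := by
  have hx (m : Fin N) : HasDerivAt (pertEigenvalue N κ₂ κ₃ κ₄ a m) (pertCoeff2 N κ₂ a m) 0 := by
    simpa using hasDerivAt_pertEigenvalue N κ₂ κ₃ κ₄ a m le_rfl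
  have hdiff (m : Fin N) := (hx m).differentiableAt
  have hinj : Function.Injective fun m => pertEigenvalue N κ₂ κ₃ κ₄ a m 0 := by
    simpa only [pertEigenvalue_zero] using ha
  have hP := (hasDerivAt_invGapSum₁ hx hinj i).isLittleO
  simp only [pertEigenvalue_zero, sum_pertCoeff2_sub_div_sq N κ₂ i ha, sub_zero,
    smul_eq_mul] at hP
  have hQ := (differentiableAt_invGapSum₂ hdiff hinj i).isLittleO_sqrt_mul_sub
  have hR := (differentiableAt_invGapSum₃ hdiff hinj i).continuousAt.isLittleO_mul_sub
  refine ((((hP.const_mul_left (-(κ₂ / N))).add (hQ.const_mul_left (-(3 * κ₃ / (2 * N ^ 2))))).add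
    (hR.const_mul_left (-(2 * κ₄ / N ^ 3)))).mono nhdsWithin_le_nhds).congr' ?_ EventuallyEq.rfl
  filter_upwards [self_mem_nhdsWithin] with t ht
  simp only [pertEigenvalue_zero, (hasDerivAt_pertEigenvalue N κ₂ κ₃ κ₄ a i ht.le).deriv,
    truncatedVelocity_eq, pertCoeff2_eq, pertCoeff3_eq, pertCoeff4_eq]
  ring

/-- The SI verification: the second-order perturbative eigenvalue trajectories solve
the truncated dynamical system `dλ_i/dt = F_i(t)` up to `o(t)` as `t → 0⁺`. -/
theorem perturbation_solves_dynamics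
    (N : ℕ) (hN : 4 ≤ N) (a : Fin N → ℝ) (ha : Function.Injective a)
    (κ₂ κ₃ κ₄ : ℝ) (i : Fin N) :
    (fun t : ℝ =>
        deriv (pertEigenvalue N κ₂ κ₃ κ₄ a i) t - truncatedVelocity N κ₂ κ₃ κ₄ a i t)
      =o[nhdsWithin 0 (Set.Ioi 0)] fun t : ℝ => t :=
  perturbation_solves_dynamics_general N a ha κ₂ κ₃ κ₄ i
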